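/- Let P and Q be probability measures on a measurable space 𝒳 with P absolutely continuous with respect to Q, let r = dP/dQ, fix α, β, γ > 0, and set f*(x) = (r(x) − α)/(β r(x) + γ). Then J(f*) = (β/2) E_P[(f*)²] + (γ/2) E_Q[(f*)²] = ((β + γ)/2) E_{P'}[(f*)²], where J(g) = E_P[g] − α E_Q[g] − (β/2) E_P[g²] − (γ/2) E_Q[g²] and P' = (β/(β+γ)) P + (γ/(β+γ)) Q is the mixture distribution of P and Q. -/

import Mathlib

/-! With `r = dP/dQ` and `f = f*`, the identity `(r - α) f = (β r + γ) f²` holds pointwise, so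
changing measure from `P` to `Q` gives `E_P[f] - α E_Q[f] = β E_P[f²] + γ E_Q[f²]`. Hence `J(f*)`
is half of this quantity (the first equality), and splitting the integral over the mixture
`P'` is the second. All integrals exist because `f` is bounded. -/

open MeasureTheory

/-- The RPC functional `J(g) = E_P[g] - α E_Q[g] - (β/2) E_P[g²] - (γ/2) E_Q[g²]`. -/
noncomputable def rpcJ {X : Type*} [MeasurableSpace X] (P Q : Measure X) (α β γ : ℝ)
    (g : X → ℝ) : ℝ :=
  (∫ x, g x ∂P) - α * (∫ x, g x ∂Q) - β / 2 * (∫ x, (g x) ^ 2 ∂P)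
    - γ / 2 * (∫ x, (g x) ^ 2 ∂Q)

/-- The relative density ratio `f*(x) = (r(x) - α)/(β r(x) + γ)` with `r = dP/dQ`. -/
noncomputable def relRatio {X : Type*} [MeasurableSpace X] (P Q : Measure X) (α β γ : ℝ)
    (x : X) : ℝ :=
  ((P.rnDeriv Q x).toReal - α) / (β * (P.rnDeriv Q x).toReal + γ)

section ChangeOfMeasure

variable {X : Type*} [MeasurableSpace X] {P Q : Measure X}

theorem mul_integral_add_mul_integral_eq_integral_rnDeriv
    [P.HaveLebesgueDecomposition Q] [SigmaFinite P] (hPQ : P ≪ Q) {g : X → ℝ}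
    (hgP : Integrable g P) (hgQ : Integrable g Q) (a b : ℝ) :
    a * ∫ x, g x ∂P + b * ∫ x, g x ∂Q = ∫ x, (a * (P.rnDeriv Q x).toReal + b) * g x ∂Q := by
  have hrg : Integrable (fun x => (P.rnDeriv Q x).toReal * g x) Q :=
    (integrable_rnDeriv_smul_iff hPQ).2 hgP
  rw [← integral_rnDeriv_smul hPQ]
  simp only [smul_eq_mul]
  rw [← integral_const_mul, ← integral_const_mul,
    ← integral_add (hrg.const_mul a) (hgQ.const_mul b)]
  congr 1 with x
  ring

theorem integral_ofReal_smul_add_ofReal_smul {g : X → ℝ} (hgP : Integrable g P)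
    (hgQ : Integrable g Q) {a b : ℝ} (ha : 0 ≤ a) (hb : 0 ≤ b) :
    ∫ x, g x ∂(ENNReal.ofReal a • P + ENNReal.ofReal b • Q)
      = a * ∫ x, g x ∂P + b * ∫ x, g x ∂Q := by
  rw [integral_add_measure (hgP.smul_measure ENNReal.ofReal_ne_top)
      (hgQ.smul_measure ENNReal.ofReal_ne_top),
    integral_smul_measure, integral_smul_measure, ENNReal.toReal_ofReal ha,
    ENNReal.toReal_ofReal hb, smul_eq_mul, smul_eq_mul]

end ChangeOfMeasure

theorem abs_sub_div_mul_add_le {t α β γ : ℝ} (ht : 0 ≤ t) (hβ : 0 < β) (hγ : 0 < γ) :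
    |(t - α) / (β * t + γ)| ≤ 1 / β + |α| / γ := by
  have hd : 0 < β * t + γ := by positivity
  rw [abs_div, abs_of_pos hd, div_le_iff₀ hd]
  have hexpand : (1 / β + |α| / γ) * (β * t + γ) = t + |α| + (γ / β + |α| / γ * (β * t)) := by
    field_simp
    ring
  have hα : |t - α| ≤ t + |α| := (abs_sub _ _).trans_eq (by rw [abs_of_nonneg ht])
  have hrest : 0 ≤ γ / β + |α| / γ * (β * t) := by positivity
  linarith

theorem mul_div_eq_mul_div_sq (a d : ℝ) : a * (a / d) = d * (a / d) ^ 2 := by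
  rcases eq_or_ne d 0 with rfl | hd
  · simp
  · field_simp

section RelRatio

variable {X : Type*} [MeasurableSpace X] (P Q : Measure X) (α : ℝ) {β γ : ℝ}

theorem measurable_relRatio (β γ : ℝ) : Measurable (relRatio P Q α β γ) :=
  have hr : Measurable fun x => (P.rnDeriv Q x).toReal :=
    (Measure.measurable_rnDeriv P Q).ennreal_toReal
  (hr.sub measurable_const).div ((measurable_const.mul hr).add measurable_const)

theorem integrable_relRatio_pow (hβ : 0 < β) (hγ : 0 < γ) (μ : Measure X) [IsFiniteMeasure μ]
    (n : ℕ) : Integrable (fun x => relRatio P Q α β γ x ^ n) μ := by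
  refine Integrable.of_bound ((measurable_relRatio P Q α β γ).pow_const n).aestronglyMeasurable
    ((1 / β + |α| / γ) ^ n) (Filter.Eventually.of_forall fun x => ?_)
  rw [Real.norm_eq_abs, abs_pow]
  exact pow_le_pow_left₀ (abs_nonneg _)
    (abs_sub_div_mul_add_le ENNReal.toReal_nonneg hβ hγ) n

theorem integral_relRatio_sub_eq [IsFiniteMeasure P] [IsFiniteMeasure Q] (hPQ : P ≪ Q)
    (hβ : 0 < β) (hγ : 0 < γ) :
    ∫ x, relRatio P Q α β γ x ∂P - α * ∫ x, relRatio P Q α β γ x ∂Q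
      = β * ∫ x, relRatio P Q α β γ x ^ 2 ∂P + γ * ∫ x, relRatio P Q α β γ x ^ 2 ∂Q := by
  set f := relRatio P Q α β γ
  have hfP : Integrable f P := by simpa using integrable_relRatio_pow P Q α hβ hγ P 1
  have hfQ : Integrable f Q := by simpa using integrable_relRatio_pow P Q α hβ hγ Q 1
  calc ∫ x, f x ∂P - α * ∫ x, f x ∂Q = 1 * ∫ x, f x ∂P + -α * ∫ x, f x ∂Q := by ring
    _ = ∫ x, (1 * (P.rnDeriv Q x).toReal + -α) * f x ∂Q :=
      mul_integral_add_mul_integral_eq_integral_rnDeriv hPQ hfP hfQ 1 (-α)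
    _ = ∫ x, (β * (P.rnDeriv Q x).toReal + γ) * f x ^ 2 ∂Q := by
      congr 1 with x
      rw [one_mul, ← sub_eq_add_neg]
      exact mul_div_eq_mul_div_sq _ _
    _ = β * ∫ x, f x ^ 2 ∂P + γ * ∫ x, f x ^ 2 ∂Q :=
      (mul_integral_add_mul_integral_eq_integral_rnDeriv hPQ
        (integrable_relRatio_pow P Q α hβ hγ P 2) (integrable_relRatio_pow P Q α hβ hγ Q 2)
        β γ).symm

end RelRatio

theorem rpc_chi_square_identity_general {X : Type*} [MeasurableSpace X] (P Q : Measure X)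
    [IsProbabilityMeasure P] [IsProbabilityMeasure Q] (hPQ : P ≪ Q)
    (α β γ : ℝ) (hβ : 0 < β) (hγ : 0 < γ) :
    rpcJ P Q α β γ (relRatio P Q α β γ)
        = β / 2 * (∫ x, (relRatio P Q α β γ x) ^ 2 ∂P)
          + γ / 2 * (∫ x, (relRatio P Q α β γ x) ^ 2 ∂Q) ∧
    rpcJ P Q α β γ (relRatio P Q α β γ)
        = (β + γ) / 2 *
          (∫ x, (relRatio P Q α β γ x) ^ 2
            ∂(ENNReal.ofReal (β / (β + γ)) • P + ENNReal.ofReal (γ / (β + γ)) • Q)) := by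
  have hJ : rpcJ P Q α β γ (relRatio P Q α β γ)
      = β / 2 * (∫ x, (relRatio P Q α β γ x) ^ 2 ∂P)
        + γ / 2 * (∫ x, (relRatio P Q α β γ x) ^ 2 ∂Q) := by
    unfold rpcJ
    linarith [integral_relRatio_sub_eq P Q α hPQ hβ hγ]
  refine ⟨hJ, ?_⟩
  rw [hJ, integral_ofReal_smul_add_ofReal_smul (integrable_relRatio_pow P Q α hβ hγ P 2)
    (integrable_relRatio_pow P Q α hβ hγ Q 2) (by positivity) (by positivity)]
  field_simp

/-- The identity relating J_RPC to a generalized Chi-square divergence: with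
`P' = (β/(β+γ)) P + (γ/(β+γ)) Q` the mixture of `P` and `Q`, and
`f* = (dP/dQ - α)/(β dP/dQ + γ)`, one has
`J(f*) = (β/2) E_P[(f*)²] + (γ/2) E_Q[(f*)²] = ((β+γ)/2) E_{P'}[(f*)²]`. -/
theorem rpc_chi_square_identity {X : Type*} [MeasurableSpace X] (P Q : Measure X)
    [IsProbabilityMeasure P] [IsProbabilityMeasure Q] (hPQ : P ≪ Q)
    (α β γ : ℝ) (hα : 0 < α) (hβ : 0 < β) (hγ : 0 < γ) :
    rpcJ P Q α β γ (relRatio P Q α β γ)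
        = β / 2 * (∫ x, (relRatio P Q α β γ x) ^ 2 ∂P)
          + γ / 2 * (∫ x, (relRatio P Q α β γ x) ^ 2 ∂Q) ∧
    rpcJ P Q α β γ (relRatio P Q α β γ)
        = (β + γ) / 2 *
          (∫ x, (relRatio P Q α β γ x) ^ 2
            ∂(ENNReal.ofReal (β / (β + γ)) • P + ENNReal.ofReal (γ / (β + γ)) • Q)) :=
  rpc_chi_square_identity_general P Q hPQ α β γ hβ hγ
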